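/- arXiv:2106.14557 — 3 statements merged into one kernel-verified Lean document; each statement's English description precedes it below -/
import Mathlib

section
/- Let R be a root system of a complex simple Lie algebra with compact/noncompact partition coming from a symmetric pair, and fix a base Π with Π_nc the set of noncompact simple roots. Suppose condition (*): for every ψ ∈ Π_nc there exists ψ' ∈ Π_nc with ψ + ψ' ∈ R, and suppose no nonzero element of 𝔨 centralizes 𝔭. Then there exist strictly positive real numbers (g_α)_{α ∈ R⁺} such that Σ_{α ∈ R_𝔨⁺} g_α α = Σ_{α ∈ R_𝔭⁺} g_α α. -/
/-!
The solutions `g` of `∑_{α ∈ R_𝔨⁺} g α • α = ∑_{α ∈ R_𝔭⁺} g α • α` form a linear space, and a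
linear relation among positive roots becomes such a solution once its coefficients at the
noncompact roots are negated. Order the positive roots as noncompact simple, noncompact
non-simple, compact simple, compact non-simple. Each root `ρ` carries a solution that is
positive at `ρ` and nonnegative at every other root of rank at least that of `ρ`: for a
noncompact simple `ψ` the relation `ψ + ψ' = (ψ + ψ')` given by (*); for a compact simple `β`
the relation `β + γ = (β + γ)` with `γ` noncompact given by the centralizer condition, in which
only noncompact roots occur besides `β`; for a non-simple `ρ` its expansion `ρ = ∑ nᵢ bᵢ` in
simple roots. Such a triangular family combines into a strictly positive solution.
-/

open Finset

theorem Submodule.exists_forall_pos_of_triangular {X 𝕜 β : Type*} [CommRing 𝕜] [LinearOrder 𝕜]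
    [IsStrictOrderedRing 𝕜] [LinearOrder β] (W : Submodule 𝕜 (X → 𝕜)) (S : Finset X)
    (rank : X → β)
    (h : ∀ ρ ∈ S, ∃ r ∈ W, 0 < r ρ ∧ ∀ α ∈ S, rank ρ ≤ rank α → α ≠ ρ → 0 ≤ r α) :
    ∃ r ∈ W, ∀ α ∈ S, 0 < r α := by
  classical
  induction S using Finset.induction_on_min_value rank with
  | empty => exact ⟨0, W.zero_mem, by simp⟩
  | insert a s ha hmin ih =>
    obtain ⟨q, hqW, hq⟩ := ih fun ρ hρ => (h ρ (mem_insert_of_mem hρ)).imp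
      fun r ⟨hrW, hrρ, hr⟩ => ⟨hrW, hrρ, fun α hα => hr α (mem_insert_of_mem hα)⟩
    obtain ⟨r, hrW, hra, hr⟩ := h a (mem_insert_self a s)
    have hrs : ∀ α ∈ s, 0 ≤ r α := fun α hα =>
      hr α (mem_insert_of_mem hα) (hmin α hα) (ne_of_mem_of_not_mem hα ha)
    refine ⟨r a • q + (|q a| + 1) • r, W.add_mem (W.smul_mem _ hqW) (W.smul_mem _ hrW), ?_⟩
    simp only [forall_mem_insert, Pi.add_apply, Pi.smul_apply, smul_eq_mul]
    refine ⟨?_, fun α hα => add_pos_of_pos_of_nonneg (mul_pos hra (hq α hα))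
      (mul_nonneg (by positivity) (hrs α hα))⟩
    calc 0 < r a * (q a + |q a| + 1) := mul_pos hra (by linarith [neg_abs_le (q a)])
      _ = r a * q a + (|q a| + 1) * r a := by ring

section Balance

variable (𝕜 : Type*) {V : Type*} [CommRing 𝕜] (K P : Finset V)

section Sign

variable [DecidableEq V]

def compactSign (v : V) : 𝕜 := if v ∈ K then 1 else -1

variable {𝕜 K}

theorem compactSign_mul_self (v : V) : compactSign 𝕜 K v * compactSign 𝕜 K v = 1 := by
  unfold compactSign; split_ifs <;> norm_num

theorem compactSign_mul_eq_neg_one {v w : V} (h : v ∉ K ↔ w ∈ K) :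
    compactSign 𝕜 K v * compactSign 𝕜 K w = -1 := by
  unfold compactSign; split_ifs <;> simp_all

end Sign

variable [AddCommGroup V] [Module 𝕜 V]

def balance : (V → 𝕜) →ₗ[𝕜] V where
  toFun r := ∑ α ∈ K, r α • α - ∑ α ∈ P, r α • α
  map_add' r s := by simp only [Pi.add_apply, add_smul, sum_add_distrib]; abel
  map_smul' c r := by simp only [Pi.smul_apply, smul_eq_mul, mul_smul, ← smul_sum, smul_sub,
    RingHom.id_apply]

variable {𝕜 K P}

theorem balance_apply (r : V → 𝕜) :
    balance 𝕜 K P r = ∑ α ∈ K, r α • α - ∑ α ∈ P, r α • α := rfl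

variable [DecidableEq V]

theorem balance_single (hKP : Disjoint K P) {v : V} (hv : v ∈ K ∪ P) (c : 𝕜) :
    balance 𝕜 K P (Pi.single v c) = (compactSign 𝕜 K v * c) • v := by
  rcases mem_union.1 hv with hK | hP
  · simp [balance_apply, Pi.single_apply, ite_smul, compactSign, hK, disjoint_left.1 hKP hK]
  · simp [balance_apply, Pi.single_apply, ite_smul, compactSign, hP, disjoint_right.1 hKP hP]

variable [LinearOrder 𝕜] [IsStrictOrderedRing 𝕜]

theorem exists_nonneg_mem_ker_balance_of_add_mem (hKP : Disjoint K P) {ψ ψ' : V} (hψ : ψ ∈ P)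
    (hψ' : ψ' ∈ P) (hsum : ψ + ψ' ∈ K) :
    ∃ r ∈ LinearMap.ker (balance 𝕜 K P), 0 < r ψ ∧ 0 ≤ r := by
  have hψK := disjoint_right.1 hKP hψ
  have hψ'K := disjoint_right.1 hKP hψ'
  have hq : (0 : V → 𝕜) ≤ Pi.single ψ' 1 + Pi.single (ψ + ψ') 1 :=
    add_nonneg (Pi.single_nonneg.2 zero_le_one) (Pi.single_nonneg.2 zero_le_one)
  refine ⟨Pi.single ψ 1 + (Pi.single ψ' 1 + Pi.single (ψ + ψ') 1), ?_, ?_,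
    add_nonneg (Pi.single_nonneg.2 zero_le_one) hq⟩
  · simp [balance_single hKP, hψ, hψ', hsum, compactSign, hψK, hψ'K]
  · simpa using add_pos_of_pos_of_nonneg one_pos (hq ψ)

theorem exists_mem_ker_balance_of_add_smul_eq_smul (hKP : Disjoint K P) {β σ τ : V}
    (hβ : β ∈ K) (hσ : σ ∈ P) (hτ : τ ∈ P) {s t : 𝕜} (h : β + s • σ = t • τ) :
    ∃ r ∈ LinearMap.ker (balance 𝕜 K P), 0 < r β ∧ ∀ α ∈ K, α ≠ β → r α = 0 := by
  have hσK := disjoint_right.1 hKP hσ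
  have hτK := disjoint_right.1 hKP hτ
  refine ⟨Pi.single β 1 - Pi.single σ s + Pi.single τ t, ?_, ?_, fun α hα hne => ?_⟩
  · simp [balance_single hKP, hβ, hσ, hτ, compactSign, hσK, hτK, ← h]
  · simp [ne_of_mem_of_not_mem hβ hσK, ne_of_mem_of_not_mem hβ hτK]
  · simp [hne, ne_of_mem_of_not_mem hα hσK, ne_of_mem_of_not_mem hα hτK]

theorem exists_mem_ker_balance_of_eq_sum {ι : Type*} [Fintype ι] (hKP : Disjoint K P)
    {b : ι → V} (hb : ∀ i, b i ∈ K ∪ P) {ρ : V} (hρ : ρ ∈ K ∪ P) (hρb : ρ ∉ Set.range b)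
    {n : ι → 𝕜} (hn : 0 ≤ n) (hρn : ρ = ∑ i, n i • b i) :
    ∃ r ∈ LinearMap.ker (balance 𝕜 K P), 0 < r ρ ∧
      ∀ α ≠ ρ, (α ∈ Set.range b → (α ∈ K ↔ ρ ∉ K)) → 0 ≤ r α := by
  have hρb' : ∀ i, ρ ≠ b i := fun i h => hρb ⟨i, h.symm⟩
  refine ⟨Pi.single ρ 1 -
    compactSign 𝕜 K ρ • ∑ i, Pi.single (b i) (compactSign 𝕜 K (b i) * n i), ?_, ?_,
    fun α hne hα => ?_⟩
  · simp only [LinearMap.mem_ker, map_sub, map_smul, map_sum, balance_single hKP hρ,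
      balance_single hKP (hb _), ← mul_assoc, compactSign_mul_self, one_mul, mul_one, ← hρn,
      sub_self]
  · simp [hρb']
  · simp only [Pi.sub_apply, Pi.smul_apply, smul_eq_mul, Finset.sum_apply, Pi.single_apply, hne,
      if_false, zero_sub, mul_sum, neg_nonneg]
    refine sum_nonpos fun i _ => ?_
    split_ifs with h
    · subst h
      rw [← mul_assoc, compactSign_mul_eq_neg_one (hα ⟨i, rfl⟩).symm, neg_one_mul,
        neg_nonpos]
      exact hn i
    · rw [mul_zero]

theorem exists_pos_mem_ker_balance {ι : Type*} [Fintype ι] (hKP : Disjoint K P) (b : ι → V)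
    (hb : ∀ i, b i ∈ K ∪ P) (hpos : ∀ ρ ∈ K ∪ P, ρ ∈ AddSubmonoid.closure (Set.range b))
    (hP : ∀ i, b i ∈ P → ∃ i', b i' ∈ P ∧ b i + b i' ∈ K)
    (hK : ∀ i, b i ∈ K → ∃ σ ∈ P, ∃ τ ∈ P, ∃ s t : 𝕜, b i + s • σ = t • τ) :
    ∃ r ∈ LinearMap.ker (balance 𝕜 K P), ∀ α ∈ K ∪ P, 0 < r α := by
  classical
  refine (LinearMap.ker _).exists_forall_pos_of_triangular (K ∪ P)
    (fun α => (if α ∈ K then 2 else 0) + if α ∈ Set.range b then 0 else 1) fun ρ hρ => ?_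
  by_cases hρb : ρ ∈ Set.range b
  · obtain ⟨i, rfl⟩ := hρb
    by_cases hiK : b i ∈ K
    · obtain ⟨σ, hσ, τ, hτ, s, t, h⟩ := hK i hiK
      obtain ⟨r, hr, hri, hr0⟩ := exists_mem_ker_balance_of_add_smul_eq_smul hKP hiK hσ hτ h
      refine ⟨r, hr, hri, fun α _ hrank hne => (hr0 α ?_ hne).ge⟩
      by_contra hαK
      simp only [hiK, hαK, Set.mem_range_self] at hrank
      split_ifs at hrank <;> omega
    · have hiP : b i ∈ P := (mem_union.1 hρ).resolve_left hiK
      obtain ⟨i', hi', hsum⟩ := hP i hiP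
      obtain ⟨r, hr, hri, hr0⟩ :=
        exists_nonneg_mem_ker_balance_of_add_mem (𝕜 := 𝕜) hKP hiP hi' hsum
      exact ⟨r, hr, hri, fun α _ _ _ => hr0 α⟩
  · obtain ⟨n, hn⟩ := AddSubmonoid.mem_closure_range_iff_of_fintype.1 (hpos ρ hρ)
    simp only [← Nat.cast_smul_eq_nsmul 𝕜] at hn
    obtain ⟨r, hr, hrρ, hr0⟩ := exists_mem_ker_balance_of_eq_sum hKP hb hρ hρb
      (n := fun i => (n i : 𝕜)) (fun i => Nat.cast_nonneg _) hn
    refine ⟨r, hr, hrρ, fun α _ hrank hne => hr0 α hne fun hαb => ?_⟩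
    simp only [hρb, hαb] at hrank
    split_ifs at hrank <;> simp_all

end Balance

theorem balanced_equation_has_positive_solution_general
    {V : Type*} [AddCommGroup V] [Module ℝ V] {ι : Type*} [Fintype ι]
    (b : ι → V)
    (R Rk Rp : Set V)
    (hRunion : R = Rk ∪ Rp) (hdisj : Rk ∩ Rp = ∅)
    (hbase : ∀ i, b i ∈ R)
    (hnegp : ∀ α ∈ Rp, -α ∈ Rp)
    (hsumkp : ∀ α ∈ Rk, ∀ β ∈ Rp, α + β ∈ R → α + β ∈ Rp)
    (hsumpp : ∀ α ∈ Rp, ∀ β ∈ Rp, α + β ∈ R → α + β ∈ Rk)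
    (hposneg : ∀ α ∈ R, (∃ n : ι → ℕ, α = ∑ i, (n i : ℝ) • b i) ∨
      (∃ n : ι → ℕ, -α = ∑ i, (n i : ℝ) • b i))
    (Rkpos Rppos : Finset V)
    (hRkpos : ∀ α : V, α ∈ Rkpos ↔ α ∈ Rk ∧ ∃ n : ι → ℕ, α = ∑ i, (n i : ℝ) • b i)
    (hRppos : ∀ α : V, α ∈ Rppos ↔ α ∈ Rp ∧ ∃ n : ι → ℕ, α = ∑ i, (n i : ℝ) • b i)
    (hstar : ∀ i, b i ∈ Rp → ∃ i', b i' ∈ Rp ∧ b i + b i' ∈ R)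
    (hcent : ∀ i, b i ∈ Rk → ∃ γ ∈ Rp, b i + γ ∈ R) :
    ∃ g : V → ℝ, (∀ α ∈ Rkpos, 0 < g α) ∧ (∀ α ∈ Rppos, 0 < g α) ∧
      ∑ α ∈ Rkpos, g α • α = ∑ α ∈ Rppos, g α • α := by
  classical
  have hclosure (α : V) : (∃ n : ι → ℕ, α = ∑ i, (n i : ℝ) • b i) ↔
      α ∈ AddSubmonoid.closure (Set.range b) := by
    simp only [AddSubmonoid.mem_closure_range_iff_of_fintype, Nat.cast_smul_eq_nsmul]
  simp only [hclosure] at hposneg hRkpos hRppos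
  have hsimple (i : ι) : b i ∈ AddSubmonoid.closure (Set.range b) :=
    AddSubmonoid.subset_closure ⟨i, rfl⟩
  have hKP : Disjoint Rkpos Rppos := disjoint_left.2 fun α hαK hαP =>
    hdisj.subset ⟨((hRkpos α).1 hαK).1, ((hRppos α).1 hαP).1⟩
  have hroot : ∀ γ ∈ Rp, ∃ σ ∈ Rppos, ∃ s : ℝ, γ = s • σ := by
    intro γ hγ
    rcases hposneg γ (hRunion ▸ Or.inr hγ) with h | h
    · exact ⟨γ, (hRppos γ).2 ⟨hγ, h⟩, 1, (one_smul ℝ γ).symm⟩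
    · exact ⟨-γ, (hRppos _).2 ⟨hnegp γ hγ, h⟩, -1, by simp⟩
  refine (exists_pos_mem_ker_balance hKP b (fun i => ?_) (fun ρ hρ => ?_) (fun i hi => ?_)
    (fun i hi => ?_)).imp fun g ⟨hg, hgpos⟩ => ⟨fun α h => hgpos α (mem_union_left _ h),
      fun α h => hgpos α (mem_union_right _ h), sub_eq_zero.1 hg⟩
  · rcases hRunion ▸ hbase i with h | h <;> simp [hRkpos, hRppos, h, hsimple]
  · rcases mem_union.1 hρ with h | h
    exacts [((hRkpos ρ).1 h).2, ((hRppos ρ).1 h).2]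
  · obtain ⟨i', hi', hsum⟩ := hstar i ((hRppos _).1 hi).1
    exact ⟨i', (hRppos _).2 ⟨hi', hsimple i'⟩, (hRkpos _).2
      ⟨hsumpp _ ((hRppos _).1 hi).1 _ hi' hsum, add_mem (hsimple i) (hsimple i')⟩⟩
  · obtain ⟨γ, hγ, hsum⟩ := hcent i ((hRkpos _).1 hi).1
    obtain ⟨σ, hσ, s, rfl⟩ := hroot γ hγ
    obtain ⟨τ, hτ, t, ht⟩ := hroot _ (hsumkp _ ((hRkpos _).1 hi).1 _ hγ hsum)
    exact ⟨σ, hσ, τ, hτ, s, t, ht⟩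

/-- Solvability of the balanced equation (algebraic core of Theorem 3.1).  Let
R = R_𝔨 ∪ R_𝔭 be the compact/noncompact partition of the root system of a complex simple
Lie algebra with symmetric decomposition 𝔤 = 𝔨 ⊕ 𝔭, with base Π = {b i} (linearly
independent), positive roots being the nonnegative integral combinations of the b i, and
`Rkpos`, `Rppos` the sets of positive compact resp. noncompact roots.  Assume:
condition (*) — every noncompact simple root ψ admits a noncompact simple root ψ' with
ψ + ψ' a root — and the root-theoretic consequence of the vanishing of the centralizer
of 𝔭 in 𝔨 (`hcent`).  Then there are strictly positive reals g_α with
Σ_{α ∈ R_𝔨⁺} g_α α = Σ_{α ∈ R_𝔭⁺} g_α α. -/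
theorem balanced_equation_has_positive_solution
    {V : Type*} [AddCommGroup V] [Module ℝ V] {ι : Type*} [Fintype ι]
    (b : ι → V) (hb : LinearIndependent ℝ b)
    (R Rk Rp : Set V)
    (hRunion : R = Rk ∪ Rp) (hdisj : Rk ∩ Rp = ∅)
    (h0 : (0 : V) ∉ R)
    (hbase : ∀ i, b i ∈ R)
    (hnegk : ∀ α ∈ Rk, -α ∈ Rk) (hnegp : ∀ α ∈ Rp, -α ∈ Rp)
    (hsumkp : ∀ α ∈ Rk, ∀ β ∈ Rp, α + β ∈ R → α + β ∈ Rp)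
    (hsumpp : ∀ α ∈ Rp, ∀ β ∈ Rp, α + β ∈ R → α + β ∈ Rk)
    (hposneg : ∀ α ∈ R, (∃ n : ι → ℕ, α = ∑ i, (n i : ℝ) • b i) ∨
      (∃ n : ι → ℕ, -α = ∑ i, (n i : ℝ) • b i))
    (Rkpos Rppos : Finset V)
    (hRkpos : ∀ α : V, α ∈ Rkpos ↔ α ∈ Rk ∧ ∃ n : ι → ℕ, α = ∑ i, (n i : ℝ) • b i)
    (hRppos : ∀ α : V, α ∈ Rppos ↔ α ∈ Rp ∧ ∃ n : ι → ℕ, α = ∑ i, (n i : ℝ) • b i)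
    (hstar : ∀ i, b i ∈ Rp → ∃ i', b i' ∈ Rp ∧ b i + b i' ∈ R)
    (hcent : ∀ i, b i ∈ Rk → ∃ γ ∈ Rp, b i + γ ∈ R) :
    ∃ g : V → ℝ, (∀ α ∈ Rkpos, 0 < g α) ∧ (∀ α ∈ Rppos, 0 < g α) ∧
      ∑ α ∈ Rkpos, g α • α = ∑ α ∈ Rppos, g α • α :=
  balanced_equation_has_positive_solution_general b R Rk Rp hRunion hdisj hbase hnegp hsumkp hsumpp
    hposneg Rkpos Rppos hRkpos hRppos hstar hcent
end

section
/- Let Π = Π_c ∪ Π_nc be a base of the root system of an inner symmetric pair such that some noncompact simple root ψ has no long root among its Dynkin-diagram neighbors, and all neighbors Λ of ψ are short with |Λ| ≤ 3. Then the reflected base s_ψ(Π) satisfies: its noncompact elements are exactly {−ψ} ∪ {ψ + λ : λ ∈ Λ}, and for every noncompact element φ of s_ψ(Π) there is another noncompact element φ' of s_ψ(Π) with φ + φ' a root. -/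
open scoped RealInnerProductSpace

/-- Key step of Lemma 3.2: let Π be a base of the root system R = R_𝔨 ∪ R_𝔭 of an inner
symmetric pair whose unique noncompact simple root ψ is short, has no long
Dynkin-diagram neighbor, and whose set Λ of neighbors (all short, so s_ψ(λ) = λ + ψ for
λ ∈ Λ) has at most 3 elements.  Then the noncompact elements of the reflected base
s_ψ(Π) are exactly {−ψ} ∪ {ψ + λ : λ ∈ Λ}, and for every noncompact element φ of
s_ψ(Π) there is another noncompact element φ' of s_ψ(Π) with φ + φ' a root. -/
theorem reflected_base_noncompact_roots
    {V : Type*} [NormedAddCommGroup V] [InnerProductSpace ℝ V] [DecidableEq V]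
    (R Rk Rp : Set V)
    (hRunion : R = Rk ∪ Rp)
    (hdisj : Rk ∩ Rp = ∅)
    (h0 : (0 : V) ∉ R)
    (hnegk : ∀ α ∈ Rk, -α ∈ Rk) (hnegp : ∀ α ∈ Rp, -α ∈ Rp)
    (hsumpp : ∀ α ∈ Rp, ∀ β ∈ Rp, α + β ∈ R → α + β ∈ Rk)
    (hsumkp : ∀ α ∈ Rk, ∀ β ∈ Rp, α + β ∈ R → α + β ∈ Rp)
    (base : Finset V) (hbaseR : ↑base ⊆ R)
    (ψ : V) (hψbase : ψ ∈ base) (hψnc : ψ ∈ Rp)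
    (hnc : ∀ l ∈ base, l ≠ ψ → l ∈ Rk)
    (Λ : Finset V) (hΛ : ∀ l : V, l ∈ Λ ↔ l ∈ base ∧ l ≠ ψ ∧ ⟪l, ψ⟫ ≠ 0)
    (hΛcard : Λ.card ≤ 3) (hΛne : Λ.Nonempty)
    (s : V → V) (hs : ∀ v, s v = v - (2 * ⟪v, ψ⟫ / ⟪ψ, ψ⟫) • ψ)
    (hrefl : ∀ α ∈ R, s α ∈ R)
    (hshort : ∀ l ∈ Λ, s l = l + ψ) :
    ({φ : V | φ ∈ base.image s ∧ φ ∈ Rp} = insert (-ψ) ((fun l => l + ψ) '' (Λ : Set V))) ∧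
    (∀ φ ∈ base.image s, φ ∈ Rp → ∃ φ' ∈ base.image s, φ' ∈ Rp ∧ φ + φ' ∈ R) := by

  have hψR : ψ ∈ R := hbaseR hψbase
  have hψne : ψ ≠ 0 := fun h => h0 (h ▸ hψR)
  have hip : ⟪ψ, ψ⟫ ≠ 0 := fun h => hψne (inner_self_eq_zero.mp h)
  have hdisj' : ∀ x, x ∈ Rk → x ∈ Rp → False := fun x hk hp =>
    Set.eq_empty_iff_forall_notMem.mp hdisj x ⟨hk, hp⟩
  have hsψ : s ψ = -ψ := by
    rw [hs, mul_div_assoc, div_self hip, mul_one]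
    module
  have hΛnc : ∀ l ∈ Λ, l + ψ ∈ Rp := by
    intro l hl
    obtain ⟨hlb, hlψ, _⟩ := (hΛ l).mp hl
    have hR : l + ψ ∈ R := by
      have := hrefl l (hbaseR hlb)
      rwa [hshort l hl] at this
    exact hsumkp l (hnc l hlb hlψ) ψ hψnc hR
  constructor
  · ext φ
    simp only [Set.mem_setOf_eq, Set.mem_insert_iff, Set.mem_image, Finset.mem_coe,
      Finset.mem_image]
    constructor
    · rintro ⟨⟨l, hl, rfl⟩, hp⟩
      by_cases hlψ : l = ψ
      · left; subst hlψ; exact hsψ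
      · right
        by_cases ho : ⟪l, ψ⟫ = 0
        · exfalso
          have hsl : s l = l := by rw [hs, ho]; simp
          exact hdisj' l (hnc l hl hlψ) (hsl ▸ hp)
        · exact ⟨l, (hΛ l).mpr ⟨hl, hlψ, ho⟩, (hshort l ((hΛ l).mpr ⟨hl, hlψ, ho⟩)).symm⟩
    · rintro (rfl | ⟨l, hlΛ, rfl⟩)
      · exact ⟨⟨ψ, hψbase, hsψ⟩, hnegp ψ hψnc⟩
      · exact ⟨⟨l, ((hΛ l).mp hlΛ).1, hshort l hlΛ⟩, hΛnc l hlΛ⟩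
  · intro φ hφ hφp
    obtain ⟨l, hl, rfl⟩ := Finset.mem_image.mp hφ
    obtain ⟨μ, hμ⟩ := hΛne
    by_cases hlψ : l = ψ
    · refine ⟨μ + ψ, Finset.mem_image.mpr ⟨μ, ((hΛ μ).mp hμ).1, hshort μ hμ⟩, hΛnc μ hμ, ?_⟩
      rw [hlψ, hsψ]
      have : -ψ + (μ + ψ) = μ := by module
      rw [this]
      exact hbaseR ((hΛ μ).mp hμ).1
    · by_cases ho : ⟪l, ψ⟫ = 0
      · exfalso
        have hsl : s l = l := by rw [hs, ho]; simp
        exact hdisj' l (hnc l hl hlψ) (hsl ▸ hφp)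
      · have hlΛ : l ∈ Λ := (hΛ l).mpr ⟨hl, hlψ, ho⟩
        refine ⟨-ψ, Finset.mem_image.mpr ⟨ψ, hψbase, hsψ⟩, hnegp ψ hψnc, ?_⟩
        rw [hshort l hlΛ]
        have : l + ψ + -ψ = l := by module
        rw [this]
        exact hbaseR hl
end

section
/- Let 𝔤 be a complex semisimple Lie algebra with Cartan subalgebra 𝔥 and root system R. Let h be a Hermitian form for which the root space decomposition is orthogonal (h(𝔤_α, 𝔤_β) = 0 unless β = −α), invariant under ad(𝔥), and let J act on 𝔤_α by i·ε_α with ε_α = ±1 according to α ∈ R^±. Suppose h satisfies the pluriclosed relation: for all α, β ∈ R⁺, B-dual pairing h(H_α, H_β) = N_{α,β}²(a_{α+β} − a_α − a_β) + N_{α,−β}² ε_{α−β}(ε_{α−β} a_{α−β} + a_β − a_α), where a_γ = h(E_γ, E_{−γ}). If there exist ψ₁, ψ₂ ∈ R⁺ with φ := ψ₁ + ψ₂ ∈ R⁺, φ + ψ₁ ∉ R, a_{ψ₁}, a_{ψ₂} > 0, a_φ < 0, and h(H_{ψ₂}, H_{ψ₂}) < 0, then a contradiction follows: one derives h(H_{ψ₂},H_{ψ₂})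 = (N_{φ,−ψ₁}² + N_{ψ₁,ψ₂}²)(a_{ψ₂} + a_{ψ₁} − a_φ) > 0. -/
/-- Algebraic core of the non-existence of pluriclosed metrics.  With Weyl-basis data on
the root system (h(H_α,H_β) bilinear symmetric, a_γ = h(E_γ,E_{−γ}), signs ε_γ = 1 for
γ positive, structure constants N vanishing on non-roots) satisfying the pluriclosed
relation for all distinct positive roots, the existence of positive roots ψ₁, ψ₂ with
φ = ψ₁ + ψ₂ a positive root, φ + ψ₁ not a root, ψ₁ − ψ₂ not a root, a_{ψ₁}, a_{ψ₂} > 0,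
a_φ < 0, h(H_γ,H_γ) < 0 for positive roots γ, and N_{ψ₁,ψ₂} ≠ 0 yields a
contradiction. -/
theorem no_pluriclosed_contradiction
    {V : Type*} [AddCommGroup V]
    (R Rplus : Set V) (hsub : Rplus ⊆ R)
    (hH : V → V → ℝ) (N : V → V → ℝ) (a : V → ℝ) (ε : V → ℝ)
    (hHsymm : ∀ u v : V, hH u v = hH v u)
    (hHadd : ∀ u v w : V, hH (u + v) w = hH u w + hH v w)
    (hεpos : ∀ γ ∈ Rplus, ε γ = 1)
    (hNvanish : ∀ u v : V, u + v ∉ R → N u v = 0)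
    (hHneg : ∀ γ ∈ Rplus, hH γ γ < 0)
    (hrel : ∀ α ∈ Rplus, ∀ β ∈ Rplus, α ≠ β →
      hH α β = N α β ^ 2 * (a (α + β) - a α - a β)
        + N α (-β) ^ 2 * ε (α - β) * (ε (α - β) * a (α - β) + a β - a α))
    (ψ₁ ψ₂ : V) (h1 : ψ₁ ∈ Rplus) (h2 : ψ₂ ∈ Rplus)
    (hφ : ψ₁ + ψ₂ ∈ Rplus)
    (hnotroot : (ψ₁ + ψ₂) + ψ₁ ∉ R)
    (hsimple : ψ₁ - ψ₂ ∉ R)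
    (ha1 : 0 < a ψ₁) (ha2 : 0 < a ψ₂) (haφ : a (ψ₁ + ψ₂) < 0)
    (hN12 : N ψ₁ ψ₂ ≠ 0) :
    False := by
  have hφne1 : ψ₁ + ψ₂ ≠ ψ₁ := by
    intro h
    have hz : ψ₂ = 0 := by
      have := congrArg (fun x => x - ψ₁) h
      simpa [add_sub_cancel_left] using this
    exact hsimple (by simpa [hz] using hsub h1)
  have e1 := hrel _ hφ _ h1 hφne1
  rw [hNvanish _ _ hnotroot, add_sub_cancel_left, hεpos _ h2] at e1
  -- e1 : hH (ψ₁+ψ₂) ψ₁ = 0^2 * ... + N (ψ₁+ψ₂) (-ψ₁)^2 * 1 * (1 * a ψ₂ + a ψ₁ - a (ψ₁+ψ₂))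
  have e1' : hH (ψ₁ + ψ₂) ψ₁
      = N (ψ₁ + ψ₂) (-ψ₁) ^ 2 * (a ψ₂ + a ψ₁ - a (ψ₁ + ψ₂)) := by
    rw [e1]; ring
  have hexp : hH (ψ₁ + ψ₂) ψ₁ = hH ψ₁ ψ₁ + hH ψ₁ ψ₂ := by
    rw [hHadd, hHsymm ψ₂ ψ₁]
  by_cases hne : ψ₁ = ψ₂
  · have hneg := hHneg ψ₁ h1
    have h12 : hH ψ₁ ψ₂ = hH ψ₁ ψ₁ := by rw [← hne]
    nlinarith [sq_nonneg (N (ψ₁ + ψ₂) (-ψ₁))]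
  · have e2 := hrel ψ₁ h1 ψ₂ h2 hne
    rw [hNvanish ψ₁ (-ψ₂) (by simpa [sub_eq_add_neg] using hsimple)] at e2
    have e2' : hH ψ₁ ψ₂ = N ψ₁ ψ₂ ^ 2 * (a (ψ₁ + ψ₂) - a ψ₁ - a ψ₂) := by
      rw [e2]; ring
    have hneg := hHneg ψ₁ h1
    have hN2 : 0 < N ψ₁ ψ₂ ^ 2 := by positivity
    nlinarith [sq_nonneg (N (ψ₁ + ψ₂) (-ψ₁))]
end
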